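/- For every A > 0, the metric space (X_A^no, d) is geodesic: for any a, b ∈ X_A^no there exists a continuous path γ : [0,1] → X_A^no with γ(0) = a, γ(1) = b, such that for all 0 ≤ s ≤ u ≤ t ≤ 1, d(γ(s), γ(t)) = d(γ(s), γ(u)) + d(γ(u), γ(t)). -/

import Mathlib

open Set Filter

noncomputable section

/-- The edge model `X_A`: triples of positive reals satisfying the strict triangle
inequalities and having Heron area `A`. -/
def X (A : ℝ) : Set (Fin 3 → ℝ) :=
  {a | (∀ i, 0 < a i) ∧
    (∀ i j k : Fin 3, i ≠ j → j ≠ k → i ≠ k → a i < a j + a k) ∧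
    Real.sqrt ((a 0 + a 1 + a 2) * (-a 0 + a 1 + a 2) *
      (a 0 - a 1 + a 2) * (a 0 + a 1 - a 2)) / 4 = A}

/-- The non-obtuse part `X_A^no`. -/
def XNo (A : ℝ) : Set (Fin 3 → ℝ) :=
  {a | a ∈ X A ∧ ∀ i j k : Fin 3, i ≠ j → j ≠ k → i ≠ k → a i ^ 2 ≤ a j ^ 2 + a k ^ 2}

/-- The acute part `X_A^ac`. -/
def XAc (A : ℝ) : Set (Fin 3 → ℝ) :=
  {a | a ∈ X A ∧ ∀ i j k : Fin 3, i ≠ j → j ≠ k → i ≠ k → a i ^ 2 < a j ^ 2 + a k ^ 2}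

/-- The distance `d(a,b) = max_i |log a_i - log b_i|` on the edge model. -/
def dd (a b : Fin 3 → ℝ) : ℝ :=
  max |Real.log (a 0) - Real.log (b 0)|
    (max |Real.log (a 1) - Real.log (b 1)| |Real.log (a 2) - Real.log (b 2)|)

/-- The angle at vertex `i` of the triangle with edge lengths `a`, by the law of cosines. -/
def thetaA (a : Fin 3 → ℝ) (i : Fin 3) : ℝ :=
  Real.arccos ((a (i + 1) ^ 2 + a (i + 2) ^ 2 - a i ^ 2) / (2 * a (i + 1) * a (i + 2)))

set_option maxHeartbeats 1000000

open Real

/-- side length from angles -/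
def ffh (A x y z : ℝ) : ℝ := Real.sqrt (2*A*Real.sin x/(Real.sin y * Real.sin z))

lemma xno_iff (A : ℝ) (c : Fin 3 → ℝ) : c ∈ XNo A ↔
    (0 < c 0 ∧ 0 < c 1 ∧ 0 < c 2) ∧
    (c 0 < c 1 + c 2 ∧ c 1 < c 0 + c 2 ∧ c 2 < c 0 + c 1) ∧
    Real.sqrt ((c 0 + c 1 + c 2) * (-c 0 + c 1 + c 2) *
      (c 0 - c 1 + c 2) * (c 0 + c 1 - c 2)) / 4 = A ∧
    (c 0 ^ 2 ≤ c 1 ^ 2 + c 2 ^ 2 ∧ c 1 ^ 2 ≤ c 0 ^ 2 + c 2 ^ 2 ∧ c 2 ^ 2 ≤ c 0 ^ 2 + c 1 ^ 2) := by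
  constructor
  · rintro ⟨⟨hp, ht, hh⟩, hn⟩
    refine ⟨⟨hp 0, hp 1, hp 2⟩, ⟨?_, ?_, ?_⟩, hh, ?_, ?_, ?_⟩
    · exact ht 0 1 2 (by decide) (by decide) (by decide)
    · exact ht 1 0 2 (by decide) (by decide) (by decide)
    · exact ht 2 0 1 (by decide) (by decide) (by decide)
    · exact hn 0 1 2 (by decide) (by decide) (by decide)
    · exact hn 1 0 2 (by decide) (by decide) (by decide)
    · exact hn 2 0 1 (by decide) (by decide) (by decide)
  · rintro ⟨⟨p0, p1, p2⟩, ⟨t0, t1, t2⟩, hh, n0, n1, n2⟩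
    refine ⟨⟨fun i => ?_, fun i j k hij hjk hik => ?_, hh⟩, fun i j k hij hjk hik => ?_⟩
    · fin_cases i <;> assumption
    · clear hh n0 n1 n2
      have t0' : c 0 < c 2 + c 1 := by linarith
      have t1' : c 1 < c 2 + c 0 := by linarith
      have t2' : c 2 < c 1 + c 0 := by linarith
      fin_cases i <;> fin_cases j <;> fin_cases k <;>
        first | exact absurd rfl hij | exact absurd rfl hjk | exact absurd rfl hik |
          exact t0 | exact t0' | exact t1 | exact t1' | exact t2 | exact t2'
    · clear hh t0 t1 t2
      have n0' : c 0 ^ 2 ≤ c 2 ^ 2 + c 1 ^ 2 := by linarith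
      have n1' : c 1 ^ 2 ≤ c 2 ^ 2 + c 0 ^ 2 := by linarith
      have n2' : c 2 ^ 2 ≤ c 1 ^ 2 + c 0 ^ 2 := by linarith
      fin_cases i <;> fin_cases j <;> fin_cases k <;>
        first | exact absurd rfl hij | exact absurd rfl hjk | exact absurd rfl hik |
          exact n0 | exact n0' | exact n1 | exact n1' | exact n2 | exact n2'


lemma affBounds {α β t : ℝ} (h0 : 0 < α) (h1 : α ≤ π/2) (h2 : 0 < β) (h3 : β ≤ π/2)
    (ht0 : 0 ≤ t) (ht1 : t ≤ 1) : 0 < α + t*(β-α) ∧ α + t*(β-α) ≤ π/2 := by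
  rcases le_total α β with h | h
  · constructor
    · nlinarith [mul_nonneg ht0 (sub_nonneg.2 h)]
    · nlinarith [mul_nonneg (sub_nonneg.2 ht1) (sub_nonneg.2 h)]
  · constructor
    · nlinarith [mul_nonneg (sub_nonneg.2 ht1) (sub_nonneg.2 h)]
    · nlinarith [mul_nonneg ht0 (sub_nonneg.2 h)]

lemma antiLogSin {α β : ℝ} (hα0 : 0 < α) (hα1 : α ≤ π/2) (hβ0 : 0 < β) (hβ1 : β ≤ π/2)
    (hab : β ≤ α) : AntitoneOn (fun t => Real.log (Real.sin (α + t*(β-α)))) (Icc 0 1) := by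
  have hT : ∀ t ∈ Icc (0:ℝ) 1, 0 < α + t*(β-α) ∧ α + t*(β-α) ≤ π/2 :=
    fun t ht => affBounds hα0 hα1 hβ0 hβ1 ht.1 ht.2
  have hder : ∀ t ∈ Icc (0:ℝ) 1, HasDerivAt (fun t => Real.log (Real.sin (α + t*(β-α))))
      ((Real.sin (α + t*(β-α)))⁻¹ * (Real.cos (α + t*(β-α)) * (β-α))) t := by
    intro t ht
    have h1 : HasDerivAt (fun t : ℝ => α + t*(β-α)) (β-α) t := by
      simpa using ((hasDerivAt_id t).mul_const (β-α)).const_add α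
    have h2 := (Real.hasDerivAt_sin (α + t*(β-α))).comp t h1
    have hs : Real.sin (α + t*(β-α)) ≠ 0 := by
      have h := hT t ht
      have := Real.sin_pos_of_pos_of_lt_pi h.1 (lt_of_le_of_lt h.2 (by linarith [Real.pi_pos]))
      linarith
    exact (Real.hasDerivAt_log hs).comp t h2
  apply antitoneOn_of_deriv_nonpos (convex_Icc 0 1)
  · exact fun t ht => (hder t ht).continuousAt.continuousWithinAt
  · intro t ht
    rw [interior_Icc] at ht
    exact (hder t (Ioo_subset_Icc_self ht)).differentiableAt.differentiableWithinAt
  · intro t ht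
    rw [interior_Icc] at ht
    rw [(hder t (Ioo_subset_Icc_self ht)).deriv]
    have h := hT t (Ioo_subset_Icc_self ht)
    have hs : 0 < Real.sin (α + t*(β-α)) :=
      Real.sin_pos_of_pos_of_lt_pi h.1 (lt_of_le_of_lt h.2 (by linarith [Real.pi_pos]))
    have hc : 0 ≤ Real.cos (α + t*(β-α)) :=
      Real.cos_nonneg_of_mem_Icc ⟨by linarith [h.1, Real.pi_pos], h.2⟩
    have : Real.cos (α + t*(β-α)) * (β-α) ≤ 0 :=
      mul_nonpos_of_nonneg_of_nonpos hc (by linarith)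
    exact mul_nonpos_of_nonneg_of_nonpos (inv_nonneg.2 hs.le) this


lemma monoLogSin {α β : ℝ} (hα0 : 0 < α) (hα1 : α ≤ π/2) (hβ0 : 0 < β) (hβ1 : β ≤ π/2)
    (hab : α ≤ β) : MonotoneOn (fun t => Real.log (Real.sin (α + t*(β-α)))) (Icc 0 1) := by
  have hT : ∀ t ∈ Icc (0:ℝ) 1, 0 < α + t*(β-α) ∧ α + t*(β-α) ≤ π/2 := by
    intro t ht
    constructor
    · nlinarith [ht.1, ht.2, mul_nonneg ht.1 (sub_nonneg.2 hab)]
    · nlinarith [ht.1, ht.2, mul_nonneg ht.1 (sub_nonneg.2 hab)]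
  have hder : ∀ t ∈ Icc (0:ℝ) 1, HasDerivAt (fun t => Real.log (Real.sin (α + t*(β-α))))
      ((Real.sin (α + t*(β-α)))⁻¹ * (Real.cos (α + t*(β-α)) * (β-α))) t := by
    intro t ht
    have h1 : HasDerivAt (fun t : ℝ => α + t*(β-α)) (β-α) t := by
      simpa using ((hasDerivAt_id t).mul_const (β-α)).const_add α
    have h2 := (Real.hasDerivAt_sin (α + t*(β-α))).comp t h1
    have hs : Real.sin (α + t*(β-α)) ≠ 0 := by
      have := (hT t ht)
      have := Real.sin_pos_of_pos_of_lt_pi this.1 (lt_of_le_of_lt this.2 (by linarith [Real.pi_pos]))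
      linarith
    exact (Real.hasDerivAt_log hs).comp t h2
  apply monotoneOn_of_deriv_nonneg (convex_Icc 0 1)
  · exact fun t ht => (hder t ht).continuousAt.continuousWithinAt
  · intro t ht
    rw [interior_Icc] at ht
    exact (hder t (Ioo_subset_Icc_self ht)).differentiableAt.differentiableWithinAt
  · intro t ht
    rw [interior_Icc] at ht
    rw [(hder t (Ioo_subset_Icc_self ht)).deriv]
    have h := hT t (Ioo_subset_Icc_self ht)
    have hs : 0 < Real.sin (α + t*(β-α)) :=
      Real.sin_pos_of_pos_of_lt_pi h.1 (lt_of_le_of_lt h.2 (by linarith [Real.pi_pos]))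
    have hc : 0 ≤ Real.cos (α + t*(β-α)) :=
      Real.cos_nonneg_of_mem_Icc ⟨by linarith [h.1, Real.pi_pos], h.2⟩
    exact mul_nonneg (inv_nonneg.2 hs.le) (mul_nonneg hc (by linarith))


-- facts about one angle
lemma arcsinFacts (A x y z : ℝ) (hA : 0 < A) (hy : 0 < y) (hz : 0 < z)
    (hprod : (x + y + z) * (-x + y + z) * (x - y + z) * (x + y - z) = 16*A^2)
    (hno : x^2 ≤ y^2 + z^2) :
    0 < Real.arcsin (2*A/(y*z)) ∧ Real.arcsin (2*A/(y*z)) ≤ π/2 ∧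
    Real.sin (Real.arcsin (2*A/(y*z))) = 2*A/(y*z) ∧
    Real.cos (Real.arcsin (2*A/(y*z))) = (y^2+z^2-x^2)/(2*y*z) := by
  have hyz : 0 < y*z := mul_pos hy hz
  have hw : 0 < 2*A/(y*z) := by positivity
  have key : 4*(y*z)^2 - 16*A^2 = (y^2+z^2-x^2)^2 := by linear_combination hprod
  have hw1 : 2*A/(y*z) ≤ 1 := by
    rw [div_le_one hyz]
    nlinarith [sq_nonneg (y^2+z^2-x^2), sq_nonneg (2*A - y*z)]
  refine ⟨Real.arcsin_pos.2 hw, Real.arcsin_le_pi_div_two _,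
    Real.sin_arcsin (by linarith) hw1, ?_⟩
  rw [Real.cos_arcsin]
  have h1 : 1 - (2*A/(y*z))^2 = ((y^2+z^2-x^2)/(2*y*z))^2 := by
    rw [div_pow, div_pow, eq_comm, div_eq_iff (by positivity)]
    field_simp
    linear_combination (-1)*key
  rw [h1, Real.sqrt_sq (div_nonneg (by linarith) (by positivity))]

lemma anglesOfPoint (A a0 a1 a2 : ℝ) (hA : 0 < A)
    (h0 : 0 < a0) (h1 : 0 < a1) (h2 : 0 < a2)
    (hprod : (a0 + a1 + a2) * (-a0 + a1 + a2) * (a0 - a1 + a2) * (a0 + a1 - a2) = 16*A^2)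
    (hn0 : a0^2 ≤ a1^2 + a2^2) (hn1 : a1^2 ≤ a0^2 + a2^2) (hn2 : a2^2 ≤ a0^2 + a1^2) :
    (0 < Real.arcsin (2*A/(a1*a2)) ∧ Real.arcsin (2*A/(a1*a2)) ≤ π/2) ∧
    (0 < Real.arcsin (2*A/(a2*a0)) ∧ Real.arcsin (2*A/(a2*a0)) ≤ π/2) ∧
    (0 < Real.arcsin (2*A/(a0*a1)) ∧ Real.arcsin (2*A/(a0*a1)) ≤ π/2) ∧
    Real.arcsin (2*A/(a1*a2)) + Real.arcsin (2*A/(a2*a0)) + Real.arcsin (2*A/(a0*a1)) = π ∧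
    ffh A (Real.arcsin (2*A/(a1*a2))) (Real.arcsin (2*A/(a2*a0))) (Real.arcsin (2*A/(a0*a1))) = a0 ∧
    ffh A (Real.arcsin (2*A/(a2*a0))) (Real.arcsin (2*A/(a0*a1))) (Real.arcsin (2*A/(a1*a2))) = a1 ∧
    ffh A (Real.arcsin (2*A/(a0*a1))) (Real.arcsin (2*A/(a1*a2))) (Real.arcsin (2*A/(a2*a0))) = a2 := by
  obtain ⟨p0, q0, s0, c0⟩ := arcsinFacts A a0 a1 a2 hA h1 h2 hprod hn0
  obtain ⟨p1, q1, s1, c1⟩ := arcsinFacts A a1 a2 a0 hA h2 h0 (by linear_combination hprod) (by linarith)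
  obtain ⟨p2, q2, s2, c2⟩ := arcsinFacts A a2 a0 a1 hA h0 h1 (by linear_combination hprod) (by linarith)
  set α0 := Real.arcsin (2*A/(a1*a2))
  set α1 := Real.arcsin (2*A/(a2*a0))
  set α2 := Real.arcsin (2*A/(a0*a1))
  have pi_pos := Real.pi_pos
  have hsum : α0 + α1 + α2 = π := by
    have hc : Real.cos (α0 + α1) = Real.cos (π - α2) := by
      have key2 : (a1^2+a2^2-a0^2)*(a2^2+a0^2-a1^2) - 16*A^2
          = -(2*a2^2*(a0^2+a1^2-a2^2)) := by linear_combination hprod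
      have expand : (a1^2+a2^2-a0^2)/(2*a1*a2) * ((a2^2+a0^2-a1^2)/(2*a2*a0))
            - 2*A/(a1*a2) * (2*A/(a2*a0))
          = ((a1^2+a2^2-a0^2)*(a2^2+a0^2-a1^2) - 16*A^2)/(4*a0*a1*a2^2) := by
        field_simp; ring
      rw [Real.cos_pi_sub, Real.cos_add, s0, s1, c0, c1, c2, expand, key2]
      field_simp; ring
    have e1 : α0 + α1 = Real.arccos (Real.cos (α0 + α1)) :=
      (Real.arccos_cos (by linarith) (by linarith)).symm
    have e2 : π - α2 = Real.arccos (Real.cos (π - α2)) :=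
      (Real.arccos_cos (by linarith) (by linarith)).symm
    have := e1.trans (by rw [hc, ← e2])
    linarith
  refine ⟨⟨p0, q0⟩, ⟨p1, q1⟩, ⟨p2, q2⟩, hsum, ?_, ?_, ?_⟩
  · rw [ffh, s0, s1, s2, show 2*A*(2*A/(a1*a2))/(2*A/(a2*a0) * (2*A/(a0*a1))) = a0^2 by
      field_simp, Real.sqrt_sq h0.le]
  · rw [ffh, s0, s1, s2, show 2*A*(2*A/(a2*a0))/(2*A/(a0*a1) * (2*A/(a1*a2))) = a1^2 by
      field_simp, Real.sqrt_sq h1.le]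
  · rw [ffh, s0, s1, s2, show 2*A*(2*A/(a0*a1))/(2*A/(a1*a2) * (2*A/(a2*a0))) = a2^2 by
      field_simp, Real.sqrt_sq h2.le]


lemma cos_lt_one' {t : ℝ} (h0 : 0 < t) (h1 : t ≤ π) : Real.cos t < 1 := by
  have := Real.cos_lt_cos_of_nonneg_of_le_pi (le_refl 0) h1 h0
  rwa [Real.cos_zero] at this

-- s0^2 ≤ s1^2 + s2^2 for non-obtuse angle sum
lemma sinsq_le {t0 t1 t2 : ℝ} (h00 : 0 < t0) (h01 : t0 ≤ π/2)
    (h10 : 0 < t1) (h11 : t1 ≤ π/2) (h20 : 0 < t2) (h21 : t2 ≤ π/2)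
    (hsum : t0 + t1 + t2 = π) :
    Real.sin t1 ^ 2 + Real.sin t2 ^ 2 - Real.sin t0 ^ 2
      = 2 * Real.sin t1 * Real.sin t2 * Real.cos t0 ∧
    Real.sin t0 ^ 2 ≤ Real.sin t1 ^ 2 + Real.sin t2 ^ 2 ∧
    Real.sin t0 < Real.sin t1 + Real.sin t2 := by
  have pi_pos := Real.pi_pos
  have s1p : 0 < Real.sin t1 := Real.sin_pos_of_pos_of_lt_pi h10 (by linarith)
  have s2p : 0 < Real.sin t2 := Real.sin_pos_of_pos_of_lt_pi h20 (by linarith)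
  have c0n : 0 ≤ Real.cos t0 := Real.cos_nonneg_of_mem_Icc ⟨by linarith, h01⟩
  have c1n : 0 ≤ Real.cos t1 := Real.cos_nonneg_of_mem_Icc ⟨by linarith, h11⟩
  have c1l : Real.cos t1 ≤ 1 := Real.cos_le_one t1
  have c2l : Real.cos t2 < 1 := cos_lt_one' h20 (by linarith)
  have s0eq : Real.sin t0 = Real.sin t1 * Real.cos t2 + Real.cos t1 * Real.sin t2 := by
    rw [show t0 = π - (t1 + t2) by linarith, Real.sin_pi_sub, Real.sin_add]
  have c0eq : Real.cos t0 = Real.sin t1 * Real.sin t2 - Real.cos t1 * Real.cos t2 := by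
    rw [show t0 = π - (t1 + t2) by linarith, Real.cos_pi_sub, Real.cos_add]; ring
  have pyth1 : Real.sin t1 ^ 2 + Real.cos t1 ^ 2 = 1 := Real.sin_sq_add_cos_sq t1
  have pyth2 : Real.sin t2 ^ 2 + Real.cos t2 ^ 2 = 1 := Real.sin_sq_add_cos_sq t2
  have e1 : Real.sin t1 ^ 2 + Real.sin t2 ^ 2 - Real.sin t0 ^ 2
      = 2 * Real.sin t1 * Real.sin t2 * Real.cos t0 := by
    rw [s0eq, c0eq]
    linear_combination (-Real.sin t1 ^ 2) * pyth2 + (-Real.sin t2 ^ 2) * pyth1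
  refine ⟨e1, by nlinarith [mul_nonneg (mul_nonneg s1p.le s2p.le) c0n], ?_⟩
  rw [s0eq]
  nlinarith [mul_lt_mul_of_pos_left c2l s1p, mul_le_mul_of_nonneg_right c1l s2p.le]

lemma heron_sin {t0 t1 t2 : ℝ} (h00 : 0 < t0) (h01 : t0 ≤ π/2)
    (h10 : 0 < t1) (h11 : t1 ≤ π/2) (h20 : 0 < t2) (h21 : t2 ≤ π/2)
    (hsum : t0 + t1 + t2 = π) :
    (Real.sin t0 + Real.sin t1 + Real.sin t2) * (-Real.sin t0 + Real.sin t1 + Real.sin t2)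
      * (Real.sin t0 - Real.sin t1 + Real.sin t2) * (Real.sin t0 + Real.sin t1 - Real.sin t2)
      = 4 * (Real.sin t0 * Real.sin t1 * Real.sin t2)^2 := by
  obtain ⟨e1, -, -⟩ := sinsq_le h00 h01 h10 h11 h20 h21 hsum
  have pyth0 : Real.sin t0 ^ 2 + Real.cos t0 ^ 2 = 1 := Real.sin_sq_add_cos_sq t0
  linear_combination (-4*(Real.sin t1)^2*(Real.sin t2)^2) * pyth0
    - ((Real.sin t1^2 + Real.sin t2^2 - Real.sin t0^2) + 2*Real.sin t1*Real.sin t2*Real.cos t0) * e1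

lemma ffval {A x y z : ℝ} (hA : 0 < A) (hx : 0 < Real.sin x) (hy : 0 < Real.sin y)
    (hz : 0 < Real.sin z) :
    ffh A x y z = Real.sqrt (2*A/(Real.sin x*Real.sin y*Real.sin z)) * Real.sin x := by
  rw [ffh, show 2*A*Real.sin x/(Real.sin y * Real.sin z)
      = (2*A/(Real.sin x*Real.sin y*Real.sin z)) * Real.sin x ^ 2 by field_simp,
    Real.sqrt_mul (by positivity), Real.sqrt_sq hx.le]

lemma logff {A x y z : ℝ} (hA : 0 < A) (hx : 0 < Real.sin x) (hy : 0 < Real.sin y)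
    (hz : 0 < Real.sin z) :
    Real.log (ffh A x y z) = (Real.log (2*A) + Real.log (Real.sin x)
      - Real.log (Real.sin y) - Real.log (Real.sin z))/2 := by
  rw [ffh, Real.log_sqrt (by positivity), Real.log_div (by positivity) (by positivity),
    Real.log_mul (by positivity) (ne_of_gt hx), Real.log_mul (ne_of_gt hy) (ne_of_gt hz)]
  ring

lemma memFacts {A t0 t1 t2 : ℝ} (hA : 0 < A) (h00 : 0 < t0) (h01 : t0 ≤ π/2)
    (h10 : 0 < t1) (h11 : t1 ≤ π/2) (h20 : 0 < t2) (h21 : t2 ≤ π/2)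
    (hsum : t0 + t1 + t2 = π) :
    (0 < ffh A t0 t1 t2 ∧ 0 < ffh A t1 t2 t0 ∧ 0 < ffh A t2 t0 t1) ∧
    (ffh A t0 t1 t2 < ffh A t1 t2 t0 + ffh A t2 t0 t1 ∧
     ffh A t1 t2 t0 < ffh A t0 t1 t2 + ffh A t2 t0 t1 ∧
     ffh A t2 t0 t1 < ffh A t0 t1 t2 + ffh A t1 t2 t0) ∧
    Real.sqrt ((ffh A t0 t1 t2 + ffh A t1 t2 t0 + ffh A t2 t0 t1) *
      (-ffh A t0 t1 t2 + ffh A t1 t2 t0 + ffh A t2 t0 t1) *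
      (ffh A t0 t1 t2 - ffh A t1 t2 t0 + ffh A t2 t0 t1) *
      (ffh A t0 t1 t2 + ffh A t1 t2 t0 - ffh A t2 t0 t1)) / 4 = A ∧
    ((ffh A t0 t1 t2)^2 ≤ (ffh A t1 t2 t0)^2 + (ffh A t2 t0 t1)^2 ∧
     (ffh A t1 t2 t0)^2 ≤ (ffh A t0 t1 t2)^2 + (ffh A t2 t0 t1)^2 ∧
     (ffh A t2 t0 t1)^2 ≤ (ffh A t0 t1 t2)^2 + (ffh A t1 t2 t0)^2) := by
  have pi_pos := Real.pi_pos
  have s0p : 0 < Real.sin t0 := Real.sin_pos_of_pos_of_lt_pi h00 (by linarith)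
  have s1p : 0 < Real.sin t1 := Real.sin_pos_of_pos_of_lt_pi h10 (by linarith)
  have s2p : 0 < Real.sin t2 := Real.sin_pos_of_pos_of_lt_pi h20 (by linarith)
  set K := Real.sqrt (2*A/(Real.sin t0*Real.sin t1*Real.sin t2)) with hK
  have hKp : 0 < K := Real.sqrt_pos.2 (by positivity)
  have hK2 : K^2 * (Real.sin t0*Real.sin t1*Real.sin t2) = 2*A := by
    rw [Real.sq_sqrt (by positivity)]; field_simp
  have v0 : ffh A t0 t1 t2 = K * Real.sin t0 := ffval hA s0p s1p s2p
  have v1 : ffh A t1 t2 t0 = K * Real.sin t1 := by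
    rw [ffval hA s1p s2p s0p, show Real.sin t1*Real.sin t2*Real.sin t0
      = Real.sin t0*Real.sin t1*Real.sin t2 from by ring, ← hK]
  have v2 : ffh A t2 t0 t1 = K * Real.sin t2 := by
    rw [ffval hA s2p s0p s1p, show Real.sin t2*Real.sin t0*Real.sin t1
      = Real.sin t0*Real.sin t1*Real.sin t2 from by ring, ← hK]
  obtain ⟨-, le0, lt0⟩ := sinsq_le h00 h01 h10 h11 h20 h21 hsum
  obtain ⟨-, le1, lt1⟩ := sinsq_le h10 h11 h20 h21 h00 h01 (by linarith)
  obtain ⟨-, le2, lt2⟩ := sinsq_le h20 h21 h00 h01 h10 h11 (by linarith)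
  have hher := heron_sin h00 h01 h10 h11 h20 h21 hsum
  have hP : (K*Real.sin t0 + K*Real.sin t1 + K*Real.sin t2) *
      (-(K*Real.sin t0) + K*Real.sin t1 + K*Real.sin t2) *
      (K*Real.sin t0 - K*Real.sin t1 + K*Real.sin t2) *
      (K*Real.sin t0 + K*Real.sin t1 - K*Real.sin t2) = (4*A)^2 := by
    have e : (K*Real.sin t0 + K*Real.sin t1 + K*Real.sin t2) *
        (-(K*Real.sin t0) + K*Real.sin t1 + K*Real.sin t2) *
        (K*Real.sin t0 - K*Real.sin t1 + K*Real.sin t2) *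
        (K*Real.sin t0 + K*Real.sin t1 - K*Real.sin t2)
        = K^4 * ((Real.sin t0 + Real.sin t1 + Real.sin t2) *
          (-Real.sin t0 + Real.sin t1 + Real.sin t2) *
          (Real.sin t0 - Real.sin t1 + Real.sin t2) *
          (Real.sin t0 + Real.sin t1 - Real.sin t2)) := by ring
    rw [e, hher, show K^4 * (4*(Real.sin t0 * Real.sin t1 * Real.sin t2)^2)
      = 4*(K^2*(Real.sin t0*Real.sin t1*Real.sin t2))^2 by ring, hK2]
    ring
  refine ⟨⟨by rw [v0]; positivity, by rw [v1]; positivity, by rw [v2]; positivity⟩,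
    ⟨by rw [v0, v1, v2]; nlinarith, by rw [v0, v1, v2]; nlinarith,
     by rw [v0, v1, v2]; nlinarith⟩, ?_,
    by rw [v0, v1, v2]; nlinarith [sq_nonneg K], by rw [v0, v1, v2]; nlinarith [sq_nonneg K],
    by rw [v0, v1, v2]; nlinarith [sq_nonneg K]⟩
  rw [v0, v1, v2, hP, Real.sqrt_sq (by positivity)]
  field_simp


def Goal (A : ℝ) (a b : Fin 3 → ℝ) : Prop :=
  ∃ γ : ℝ → (Fin 3 → ℝ), ContinuousOn γ (Set.Icc 0 1) ∧
    (∀ t ∈ Set.Icc (0:ℝ) 1, γ t ∈ XNo A) ∧ γ 0 = a ∧ γ 1 = b ∧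
    ∀ s u t : ℝ, 0 ≤ s → s ≤ u → u ≤ t → t ≤ 1 →
      dd (γ s) (γ t) = dd (γ s) (γ u) + dd (γ u) (γ t)

lemma core (A : ℝ) (hA : 0 < A) (α0 α1 α2 β0 β1 β2 : ℝ)
    (ha00 : 0 < α0) (ha01 : α0 ≤ π/2) (ha10 : 0 < α1) (ha11 : α1 ≤ π/2)
    (ha20 : 0 < α2) (ha21 : α2 ≤ π/2) (hasum : α0 + α1 + α2 = π)
    (hb00 : 0 < β0) (hb01 : β0 ≤ π/2) (hb10 : 0 < β1) (hb11 : β1 ≤ π/2)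
    (hb20 : 0 < β2) (hb21 : β2 ≤ π/2) (hbsum : β0 + β1 + β2 = π)
    (hm0 : α0 ≤ β0) (hm1 : β1 ≤ α1) (hm2 : β2 ≤ α2) :
    Goal A ![ffh A α0 α1 α2, ffh A α1 α2 α0, ffh A α2 α0 α1]
      ![ffh A β0 β1 β2, ffh A β1 β2 β0, ffh A β2 β0 β1] := by
  set T0 : ℝ → ℝ := fun t => α0 + t*(β0-α0) with hT0
  set T1 : ℝ → ℝ := fun t => α1 + t*(β1-α1) with hT1
  set T2 : ℝ → ℝ := fun t => α2 + t*(β2-α2) with hT2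
  have hB0 : ∀ t ∈ Set.Icc (0:ℝ) 1, 0 < T0 t ∧ T0 t ≤ π/2 :=
    fun t ht => affBounds ha00 ha01 hb00 hb01 ht.1 ht.2
  have hB1 : ∀ t ∈ Set.Icc (0:ℝ) 1, 0 < T1 t ∧ T1 t ≤ π/2 :=
    fun t ht => affBounds ha10 ha11 hb10 hb11 ht.1 ht.2
  have hB2 : ∀ t ∈ Set.Icc (0:ℝ) 1, 0 < T2 t ∧ T2 t ≤ π/2 :=
    fun t ht => affBounds ha20 ha21 hb20 hb21 ht.1 ht.2
  have hTsum : ∀ t : ℝ, T0 t + T1 t + T2 t = π := by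
    intro t; simp only [hT0, hT1, hT2]; linear_combination hasum + t*hbsum - t*hasum
  have pi_pos := Real.pi_pos
  have hsin : ∀ t ∈ Set.Icc (0:ℝ) 1,
      0 < Real.sin (T0 t) ∧ 0 < Real.sin (T1 t) ∧ 0 < Real.sin (T2 t) := by
    intro t ht
    obtain ⟨x0, y0⟩ := hB0 t ht
    obtain ⟨x1, y1⟩ := hB1 t ht
    obtain ⟨x2, y2⟩ := hB2 t ht
    exact ⟨Real.sin_pos_of_pos_of_lt_pi x0 (lt_of_le_of_lt y0 (half_lt_self pi_pos)),
      Real.sin_pos_of_pos_of_lt_pi x1 (lt_of_le_of_lt y1 (half_lt_self pi_pos)),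
      Real.sin_pos_of_pos_of_lt_pi x2 (lt_of_le_of_lt y2 (half_lt_self pi_pos))⟩
  refine ⟨fun t => ![ffh A (T0 t) (T1 t) (T2 t), ffh A (T1 t) (T2 t) (T0 t),
    ffh A (T2 t) (T0 t) (T1 t)], ?_, ?_, ?_, ?_, ?_⟩
  · -- continuity
    have hc : ∀ (f g h : ℝ → ℝ), Continuous f → Continuous g → Continuous h →
        (∀ t ∈ Set.Icc (0:ℝ) 1, 0 < Real.sin (g t)) →
        (∀ t ∈ Set.Icc (0:ℝ) 1, 0 < Real.sin (h t)) →
        ContinuousOn (fun t => ffh A (f t) (g t) (h t)) (Set.Icc 0 1) := by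
      intro f g h hf hg hh hg' hh'
      apply Real.continuous_sqrt.comp_continuousOn
      apply ContinuousOn.div
      · exact (continuous_const.mul (Real.continuous_sin.comp hf)).continuousOn
      · exact ((Real.continuous_sin.comp hg).mul (Real.continuous_sin.comp hh)).continuousOn
      · intro t ht
        have := mul_pos (hg' t ht) (hh' t ht)
        exact ne_of_gt this
    have hcT0 : Continuous T0 := by fun_prop
    have hcT1 : Continuous T1 := by fun_prop
    have hcT2 : Continuous T2 := by fun_prop
    apply continuousOn_pi.2
    intro i
    fin_cases i
    · simpa using hc T0 T1 T2 hcT0 hcT1 hcT2 (fun t ht => (hsin t ht).2.1)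
        (fun t ht => (hsin t ht).2.2)
    · simpa using hc T1 T2 T0 hcT1 hcT2 hcT0 (fun t ht => (hsin t ht).2.2)
        (fun t ht => (hsin t ht).1)
    · simpa using hc T2 T0 T1 hcT2 hcT0 hcT1 (fun t ht => (hsin t ht).1)
        (fun t ht => (hsin t ht).2.1)
  · -- membership
    intro t ht
    obtain ⟨⟨p0, p1, p2⟩, ⟨q0, q1, q2⟩, hher, n0, n1, n2⟩ :=
      memFacts hA (hB0 t ht).1 (hB0 t ht).2 (hB1 t ht).1 (hB1 t ht).2
        (hB2 t ht).1 (hB2 t ht).2 (hTsum t)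
    rw [xno_iff]
    refine ⟨⟨?_, ?_, ?_⟩, ⟨?_, ?_, ?_⟩, ?_, ?_, ?_, ?_⟩ <;>
      simp only [Matrix.cons_val_zero, Matrix.cons_val_one, Matrix.head_cons,
        Matrix.cons_val_two, Matrix.tail_cons] <;> assumption
  · -- γ 0 = start
    have e0 : T0 0 = α0 := by simp [hT0]
    have e1 : T1 0 = α1 := by simp [hT1]
    have e2 : T2 0 = α2 := by simp [hT2]
    show ![ffh A (T0 0) (T1 0) (T2 0), ffh A (T1 0) (T2 0) (T0 0), ffh A (T2 0) (T0 0) (T1 0)] = _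
    rw [e0, e1, e2]
  · -- γ 1 = end
    have e0 : T0 1 = β0 := by simp [hT0]
    have e1 : T1 1 = β1 := by simp [hT1]
    have e2 : T2 1 = β2 := by simp [hT2]
    show ![ffh A (T0 1) (T1 1) (T2 1), ffh A (T1 1) (T2 1) (T0 1), ffh A (T2 1) (T0 1) (T1 1)] = _
    rw [e0, e1, e2]
  · -- additivity
    set U0 : ℝ → ℝ := fun t => Real.log (Real.sin (T0 t)) with hU0
    set U1 : ℝ → ℝ := fun t => Real.log (Real.sin (T1 t)) with hU1
    set U2 : ℝ → ℝ := fun t => Real.log (Real.sin (T2 t)) with hU2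
    have hM0 : MonotoneOn U0 (Set.Icc 0 1) := monoLogSin ha00 ha01 hb00 hb01 hm0
    have hM1 : AntitoneOn U1 (Set.Icc 0 1) := antiLogSin ha10 ha11 hb10 hb11 hm1
    have hM2 : AntitoneOn U2 (Set.Icc 0 1) := antiLogSin ha20 ha21 hb20 hb21 hm2
    have hD : ∀ s t : ℝ, 0 ≤ s → s ≤ t → t ≤ 1 →
        dd ![ffh A (T0 s) (T1 s) (T2 s), ffh A (T1 s) (T2 s) (T0 s), ffh A (T2 s) (T0 s) (T1 s)]
           ![ffh A (T0 t) (T1 t) (T2 t), ffh A (T1 t) (T2 t) (T0 t), ffh A (T2 t) (T0 t) (T1 t)]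
          = ((U0 t - U0 s) - (U1 t - U1 s) - (U2 t - U2 s))/2 := by
      intro s t hs hst ht1
      have hsI : s ∈ Set.Icc (0:ℝ) 1 := ⟨hs, le_trans hst ht1⟩
      have htI : t ∈ Set.Icc (0:ℝ) 1 := ⟨le_trans hs hst, ht1⟩
      have d0 : U0 s ≤ U0 t := hM0 hsI htI hst
      have d1 : U1 t ≤ U1 s := hM1 hsI htI hst
      have d2 : U2 t ≤ U2 s := hM2 hsI htI hst
      obtain ⟨ss0, ss1, ss2⟩ := hsin s hsI
      obtain ⟨st0, st1, st2⟩ := hsin t htI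
      have l0s := logff hA ss0 ss1 ss2
      have l1s := logff hA ss1 ss2 ss0
      have l2s := logff hA ss2 ss0 ss1
      have l0t := logff hA st0 st1 st2
      have l1t := logff hA st1 st2 st0
      have l2t := logff hA st2 st0 st1
      show max |Real.log (ffh A (T0 s) (T1 s) (T2 s)) - Real.log (ffh A (T0 t) (T1 t) (T2 t))|
        (max |Real.log (ffh A (T1 s) (T2 s) (T0 s)) - Real.log (ffh A (T1 t) (T2 t) (T0 t))|
             |Real.log (ffh A (T2 s) (T0 s) (T1 s)) - Real.log (ffh A (T2 t) (T0 t) (T1 t))|)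
        = ((U0 t - U0 s) - (U1 t - U1 s) - (U2 t - U2 s))/2
      rw [l0s, l1s, l2s, l0t, l1t, l2t]
      simp only [hU0, hU1, hU2] at d0 d1 d2 ⊢
      set D : ℝ := ((Real.log (Real.sin (T0 t)) - Real.log (Real.sin (T0 s)))
        - (Real.log (Real.sin (T1 t)) - Real.log (Real.sin (T1 s)))
        - (Real.log (Real.sin (T2 t)) - Real.log (Real.sin (T2 s))))/2 with hDdef
      have hDn : 0 ≤ D := by rw [hDdef]; linarith
      have e0 : |(Real.log (2*A) + Real.log (Real.sin (T0 s)) - Real.log (Real.sin (T1 s))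
          - Real.log (Real.sin (T2 s)))/2 - (Real.log (2*A) + Real.log (Real.sin (T0 t))
          - Real.log (Real.sin (T1 t)) - Real.log (Real.sin (T2 t)))/2| = D := by
        rw [show (Real.log (2*A) + Real.log (Real.sin (T0 s)) - Real.log (Real.sin (T1 s))
          - Real.log (Real.sin (T2 s)))/2 - (Real.log (2*A) + Real.log (Real.sin (T0 t))
          - Real.log (Real.sin (T1 t)) - Real.log (Real.sin (T2 t)))/2 = -D from by
            rw [hDdef]; ring]
        rw [abs_neg, abs_of_nonneg hDn]
      have e1 : |(Real.log (2*A) + Real.log (Real.sin (T1 s)) - Real.log (Real.sin (T2 s))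
          - Real.log (Real.sin (T0 s)))/2 - (Real.log (2*A) + Real.log (Real.sin (T1 t))
          - Real.log (Real.sin (T2 t)) - Real.log (Real.sin (T0 t)))/2| ≤ D := by
        rw [abs_le]
        constructor
        · rw [hDdef]; linarith
        · rw [hDdef]; linarith
      have e2 : |(Real.log (2*A) + Real.log (Real.sin (T2 s)) - Real.log (Real.sin (T0 s))
          - Real.log (Real.sin (T1 s)))/2 - (Real.log (2*A) + Real.log (Real.sin (T2 t))
          - Real.log (Real.sin (T0 t)) - Real.log (Real.sin (T1 t)))/2| ≤ D := by
        rw [abs_le]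
        constructor
        · rw [hDdef]; linarith
        · rw [hDdef]; linarith
      rw [e0]
      exact max_eq_left (max_le e1 e2)
    intro s u t hs hsu hut ht
    rw [hD s t hs (le_trans hsu hut) ht, hD s u hs hsu (le_trans hut ht),
      hD u t (le_trans hs hsu) hut ht]
    ring


lemma dd_comm (x y : Fin 3 → ℝ) : dd x y = dd y x := by
  unfold dd; rw [abs_sub_comm, abs_sub_comm (Real.log (x 1)), abs_sub_comm (Real.log (x 2))]

def rot (c : Fin 3 → ℝ) : Fin 3 → ℝ := fun i => c (i+1)

lemma rot3 (c : Fin 3 → ℝ) : rot (rot (rot c)) = c := by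
  funext i
  show c (i+1+1+1) = c i
  congr 1
  fin_cases i <;> rfl

lemma dd_rot (x y : Fin 3 → ℝ) : dd (rot x) (rot y) = dd x y := by
  show max |Real.log (x 1) - Real.log (y 1)|
    (max |Real.log (x 2) - Real.log (y 2)| |Real.log (x 0) - Real.log (y 0)|)
    = max |Real.log (x 0) - Real.log (y 0)|
    (max |Real.log (x 1) - Real.log (y 1)| |Real.log (x 2) - Real.log (y 2)|)
  rw [← max_assoc, max_comm]

lemma xno_rot {A : ℝ} {c : Fin 3 → ℝ} (h : c ∈ XNo A) : rot c ∈ XNo A := by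
  rw [xno_iff] at h ⊢
  obtain ⟨⟨p0, p1, p2⟩, ⟨t0, t1, t2⟩, hher, n0, n1, n2⟩ := h
  have e0 : rot c 0 = c 1 := rfl
  have e1 : rot c 1 = c 2 := rfl
  have e2 : rot c 2 = c 0 := rfl
  rw [e0, e1, e2]
  refine ⟨⟨p1, p2, p0⟩, ⟨by linarith, by linarith, by linarith⟩, ?_, by linarith, by linarith,
    by linarith⟩
  rw [show (c 1 + c 2 + c 0) * (-c 1 + c 2 + c 0) * (c 1 - c 2 + c 0) * (c 1 + c 2 - c 0)
    = (c 0 + c 1 + c 2) * (-c 0 + c 1 + c 2) * (c 0 - c 1 + c 2) * (c 0 + c 1 - c 2) from by ring]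
  exact hher

lemma goal_rot {A : ℝ} {a b : Fin 3 → ℝ} (h : Goal A (rot a) (rot b)) : Goal A a b := by
  obtain ⟨γ, hcont, hmem, h0, h1, hadd⟩ := h
  refine ⟨fun t => rot (rot (γ t)), ?_, ?_, ?_, ?_, ?_⟩
  · apply continuousOn_pi.2
    intro i
    show ContinuousOn (fun t => γ t (i+1+1)) (Set.Icc 0 1)
    exact (continuous_apply _).comp_continuousOn hcont
  · exact fun t ht => xno_rot (xno_rot (hmem t ht))
  · show rot (rot (γ 0)) = a
    rw [h0]
    conv_rhs => rw [← rot3 a]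
  · show rot (rot (γ 1)) = b
    rw [h1]
    conv_rhs => rw [← rot3 b]
  · intro s u t hs hsu hut ht
    rw [dd_rot, dd_rot, dd_rot, dd_rot, dd_rot, dd_rot]
    exact hadd s u t hs hsu hut ht

lemma goal_symm {A : ℝ} {a b : Fin 3 → ℝ} (h : Goal A b a) : Goal A a b := by
  obtain ⟨γ, hcont, hmem, h0, h1, hadd⟩ := h
  have hmap : Set.MapsTo (fun t : ℝ => 1 - t) (Set.Icc 0 1) (Set.Icc (0:ℝ) 1) := by
    intro t ht
    obtain ⟨u1, u2⟩ := ht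
    exact ⟨by simp; linarith, by simp; linarith⟩
  refine ⟨fun t => γ (1 - t), ?_, ?_, ?_, ?_, ?_⟩
  · exact hcont.comp ((continuous_const.sub continuous_id).continuousOn) hmap
  · exact fun t ht => hmem (1-t) (hmap ht)
  · norm_num [h1]
  · norm_num [h0]
  · intro s u t hs hsu hut ht
    have := hadd (1-t) (1-u) (1-s) (by linarith) (by linarith) (by linarith) (by linarith)
    rw [dd_comm (γ (1-s)) (γ (1-t)), dd_comm (γ (1-s)) (γ (1-u)), dd_comm (γ (1-u)) (γ (1-t))]
    linarith

lemma prod_eq {A P : ℝ} (hA : 0 < A) (hher : Real.sqrt P / 4 = A) : P = 16*A^2 := by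
  have h4 : Real.sqrt P = 4*A := by linarith
  have hP0 : 0 ≤ P := by
    rcases le_or_gt 0 P with h | h
    · exact h
    · exfalso
      have : Real.sqrt P = 0 := Real.sqrt_eq_zero_of_nonpos h.le
      rw [this] at h4
      linarith
  have := Real.sq_sqrt hP0
  rw [h4] at this
  linarith [this]

lemma buildGoal (A : ℝ) (hA : 0 < A) (a b : Fin 3 → ℝ) (ha : a ∈ XNo A) (hb : b ∈ XNo A)
    (h0 : Real.arcsin (2*A/(a 1 * a 2)) ≤ Real.arcsin (2*A/(b 1 * b 2)))
    (h1 : Real.arcsin (2*A/(b 2 * b 0)) ≤ Real.arcsin (2*A/(a 2 * a 0)))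
    (h2 : Real.arcsin (2*A/(b 0 * b 1)) ≤ Real.arcsin (2*A/(a 0 * a 1))) : Goal A a b := by
  rw [xno_iff] at ha hb
  obtain ⟨⟨pa0, pa1, pa2⟩, ⟨ta0, ta1, ta2⟩, hhera, na0, na1, na2⟩ := ha
  obtain ⟨⟨pb0, pb1, pb2⟩, ⟨tb0, tb1, tb2⟩, hherb, nb0, nb1, nb2⟩ := hb
  obtain ⟨⟨qa0, qa0'⟩, ⟨qa1, qa1'⟩, ⟨qa2, qa2'⟩, hsa, ra0, ra1, ra2⟩ :=
    anglesOfPoint A (a 0) (a 1) (a 2) hA pa0 pa1 pa2 (prod_eq hA hhera) na0 na1 na2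
  obtain ⟨⟨qb0, qb0'⟩, ⟨qb1, qb1'⟩, ⟨qb2, qb2'⟩, hsb, rb0, rb1, rb2⟩ :=
    anglesOfPoint A (b 0) (b 1) (b 2) hA pb0 pb1 pb2 (prod_eq hA hherb) nb0 nb1 nb2
  have hcore := core A hA _ _ _ _ _ _ qa0 qa0' qa1 qa1' qa2 qa2' hsa
    qb0 qb0' qb1 qb1' qb2 qb2' hsb h0 h1 h2
  have ea : ![ffh A (Real.arcsin (2*A/(a 1 * a 2))) (Real.arcsin (2*A/(a 2 * a 0)))
      (Real.arcsin (2*A/(a 0 * a 1))),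
      ffh A (Real.arcsin (2*A/(a 2 * a 0))) (Real.arcsin (2*A/(a 0 * a 1)))
      (Real.arcsin (2*A/(a 1 * a 2))),
      ffh A (Real.arcsin (2*A/(a 0 * a 1))) (Real.arcsin (2*A/(a 1 * a 2)))
      (Real.arcsin (2*A/(a 2 * a 0)))] = a := by
    funext i
    fin_cases i
    · simpa using ra0
    · simpa using ra1
    · simpa using ra2
  have eb : ![ffh A (Real.arcsin (2*A/(b 1 * b 2))) (Real.arcsin (2*A/(b 2 * b 0)))
      (Real.arcsin (2*A/(b 0 * b 1))),
      ffh A (Real.arcsin (2*A/(b 2 * b 0))) (Real.arcsin (2*A/(b 0 * b 1)))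
      (Real.arcsin (2*A/(b 1 * b 2))),
      ffh A (Real.arcsin (2*A/(b 0 * b 1))) (Real.arcsin (2*A/(b 1 * b 2)))
      (Real.arcsin (2*A/(b 2 * b 0)))] = b := by
    funext i
    fin_cases i
    · simpa using rb0
    · simpa using rb1
    · simpa using rb2
  rwa [ea, eb] at hcore


/-- `(X_A^no, d)` is a geodesic metric space. -/
theorem stmt11 (A : ℝ) (hA : 0 < A) (a b : Fin 3 → ℝ)
    (ha : a ∈ XNo A) (hb : b ∈ XNo A) :
    ∃ γ : ℝ → (Fin 3 → ℝ), ContinuousOn γ (Set.Icc 0 1) ∧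
      (∀ t ∈ Set.Icc (0:ℝ) 1, γ t ∈ XNo A) ∧ γ 0 = a ∧ γ 1 = b ∧
      ∀ s u t : ℝ, 0 ≤ s → s ≤ u → u ≤ t → t ≤ 1 →
        dd (γ s) (γ t) = dd (γ s) (γ u) + dd (γ u) (γ t) := by
  suffices h : Goal A a b by exact h
  obtain ⟨⟨pa0, pa1, pa2⟩, -, hhera, na0, na1, na2⟩ := (xno_iff A a).1 ha
  obtain ⟨⟨pb0, pb1, pb2⟩, -, hherb, nb0, nb1, nb2⟩ := (xno_iff A b).1 hb
  obtain ⟨-, -, -, hsa, -, -, -⟩ :=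
    anglesOfPoint A (a 0) (a 1) (a 2) hA pa0 pa1 pa2 (prod_eq hA hhera) na0 na1 na2
  obtain ⟨-, -, -, hsb, -, -, -⟩ :=
    anglesOfPoint A (b 0) (b 1) (b 2) hA pb0 pb1 pb2 (prod_eq hA hherb) nb0 nb1 nb2
  rcases le_total (Real.arcsin (2*A/(a 1 * a 2))) (Real.arcsin (2*A/(b 1 * b 2))) with c0 | c0 <;>
    rcases le_total (Real.arcsin (2*A/(a 2 * a 0))) (Real.arcsin (2*A/(b 2 * b 0))) with c1 | c1 <;>
    rcases le_total (Real.arcsin (2*A/(a 0 * a 1))) (Real.arcsin (2*A/(b 0 * b 1))) with c2 | c2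
  · -- ≤ ≤ ≤ : all equal
    exact buildGoal A hA a b ha hb c0 (by linarith) (by linarith)
  · -- ≤ ≤ ≥ : increase at 0,1
    exact goal_symm (goal_rot (goal_rot
      (buildGoal A hA (rot (rot b)) (rot (rot a)) (xno_rot (xno_rot hb)) (xno_rot (xno_rot ha))
        c2 c0 c1)))
  · -- ≤ ≥ ≤ : increase at 0,2
    exact goal_symm (goal_rot
      (buildGoal A hA (rot b) (rot a) (xno_rot hb) (xno_rot ha) c1 c2 c0))
  · -- ≤ ≥ ≥ : increase only at 0
    exact buildGoal A hA a b ha hb c0 c1 c2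
  · -- ≥ ≤ ≤ : decrease only at 0
    exact goal_symm (buildGoal A hA b a hb ha c0 c1 c2)
  · -- ≥ ≤ ≥ : increase at 1
    exact goal_rot (buildGoal A hA (rot a) (rot b) (xno_rot ha) (xno_rot hb) c1 c2 c0)
  · -- ≥ ≥ ≤ : increase at 2
    exact goal_rot (goal_rot
      (buildGoal A hA (rot (rot a)) (rot (rot b)) (xno_rot (xno_rot ha)) (xno_rot (xno_rot hb))
        c2 c0 c1))
  · -- ≥ ≥ ≥ : all equal
    exact buildGoal A hA a b ha hb (by linarith) c1 c2
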